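/- Let f : (0,∞) → ℝ be C¹ with f > 0, f' > 0 on (0,∞), and F(u) := ∫_u^∞ ds/f(s) finite for every u > 0. Suppose there exists u₀ > 0 and q_S > 1 such that f'(u)·F(u) ≤ q_S for all u ≥ u₀. Then the function u ↦ f(u)·F(u)^{q_S} is nonincreasing on [u₀, ∞), and there exists a constant C > 0 such that F(u) ≤ C·u^{-1/(q_S - 1)} for all sufficiently large u. -/

import Mathlib

/-!
Since `F' = -1/f`, the derivative of `f F^q` is `F^(q-1) (f' F - q) ≤ 0`, so `f F^q` decreases and
is bounded by `M := f(u₀) F(u₀)^q`. Then `(F^(1-q))' = (q-1) / (f F^q) ≥ (q-1) / M`, so `F^(1-q)`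
grows at least linearly, which inverts to `F(u) ≲ u^(-1/(q-1))`.
-/

open Set MeasureTheory Filter

theorem hasDerivAt_integral_Ioi {g : ℝ → ℝ} {a u : ℝ} (hg : IntegrableOn g (Ioi a)) (hau : a < u)
    (hcont : ContinuousAt g u) : HasDerivAt (fun x => ∫ s in Ioi x, g s) (-g u) u := by
  have hint : HasDerivAt (fun x => ∫ s in a..x, g s) (g u) u :=
    intervalIntegral.integral_hasDerivAt_right
      ((intervalIntegrable_iff_integrableOn_Ioc_of_le hau.le).2 (hg.mono_set Ioc_subset_Ioi_self))
      (AEStronglyMeasurable.stronglyMeasurableAtFilter_of_mem hg.aestronglyMeasurable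
        (Ioi_mem_nhds hau)) hcont
  refine (hint.const_sub (∫ s in Ioi a, g s)).congr_of_eventuallyEq ?_
  filter_upwards [Ioi_mem_nhds hau] with x hx
  rw [← intervalIntegral.integral_Ioi_sub_Ioi hg hx.le, sub_sub_cancel]

theorem integral_Ioi_pos {g : ℝ → ℝ} {u : ℝ} (hg : IntegrableOn g (Ioi u))
    (hpos : ∀ x > u, 0 < g x) : 0 < ∫ s in Ioi u, g s := by
  have hsupp : Function.support g ∩ Ioi u = Ioi u :=
    inter_eq_right.2 fun x hx => (hpos x hx).ne'
  rw [setIntegral_pos_iff_support_of_nonneg_ae ?_ hg, hsupp, Real.volume_Ioi]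
  · exact ENNReal.zero_lt_top
  · filter_upwards [ae_restrict_mem measurableSet_Ioi] with x hx using (hpos x hx).le

theorem rpow_le_of_mul_le_rpow_one_sub {c x y q : ℝ} (hq : 1 < q) (hc : 0 < c) (hx : 0 < x)
    (hy : 0 < y) (h : c * x ≤ y ^ (1 - q)) : y ≤ c ^ (-(1 / (q - 1))) * x ^ (-(1 / (q - 1))) := by
  have hq' : q - 1 ≠ 0 := (sub_pos.2 hq).ne'
  have hexp : -(1 / (q - 1)) ≤ 0 := neg_nonpos.2 (one_div_pos.2 (sub_pos.2 hq)).le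
  calc y = (y ^ (1 - q)) ^ (-(1 / (q - 1))) := by
        rw [← Real.rpow_mul hy.le, show (1 - q) * -(1 / (q - 1)) = 1 by field_simp; ring,
          Real.rpow_one]
    _ ≤ (c * x) ^ (-(1 / (q - 1))) := Real.rpow_le_rpow_of_nonpos (mul_pos hc hx) h hexp
    _ = _ := Real.mul_rpow hc.le hx.le

section TailComparison

variable {f F : ℝ → ℝ} {u₀ q : ℝ}

theorem antitoneOn_mul_rpow {f' : ℝ → ℝ} (hf : ∀ u ≥ u₀, HasDerivAt f (f' u) u)
    (hF : ∀ u ≥ u₀, HasDerivAt F (-(1 / f u)) u) (hfpos : ∀ u ≥ u₀, 0 < f u)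
    (hFpos : ∀ u ≥ u₀, 0 < F u) (hbound : ∀ u ≥ u₀, f' u * F u ≤ q) :
    AntitoneOn (fun u => f u * F u ^ q) (Ici u₀) := by
  have hderiv : ∀ u ≥ u₀, HasDerivAt (fun u => f u * F u ^ q)
      (F u ^ (q - 1) * (f' u * F u - q)) u := by
    intro u hu
    refine ((hf u hu).mul ((hF u hu).rpow_const (Or.inl (hFpos u hu).ne'))).congr_deriv ?_
    have hFu := (hFpos u hu).ne'
    have hfu := (hfpos u hu).ne'
    rw [Real.rpow_sub_one hFu]
    field_simp
    ring
  refine antitoneOn_of_hasDerivWithinAt_nonpos (convex_Ici u₀)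
    (fun u hu => (hderiv u hu).continuousAt.continuousWithinAt)
    (fun u hu => (hderiv u (interior_subset hu)).hasDerivWithinAt) fun u hu => ?_
  have hu : u₀ ≤ u := interior_subset hu
  exact mul_nonpos_of_nonneg_of_nonpos (Real.rpow_nonneg (hFpos u hu).le _)
    (sub_nonpos.2 (hbound u hu))

theorem monotoneOn_rpow_one_sub_sub_mul {M : ℝ} (hq : 1 ≤ q)
    (hF : ∀ u ≥ u₀, HasDerivAt F (-(1 / f u)) u) (hfpos : ∀ u ≥ u₀, 0 < f u)
    (hFpos : ∀ u ≥ u₀, 0 < F u) (hM : ∀ u ≥ u₀, f u * F u ^ q ≤ M) :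
    MonotoneOn (fun u => F u ^ (1 - q) - (q - 1) / M * u) (Ici u₀) := by
  have hderiv : ∀ u ≥ u₀, HasDerivAt (fun u => F u ^ (1 - q) - (q - 1) / M * u)
      ((q - 1) * ((f u * F u ^ q)⁻¹ - M⁻¹)) u := by
    intro u hu
    refine (((hF u hu).rpow_const (Or.inl (hFpos u hu).ne')).sub
      ((hasDerivAt_id u).const_mul _)).congr_deriv ?_
    rw [show 1 - q - 1 = -q by ring, Real.rpow_neg (hFpos u hu).le]
    ring
  refine monotoneOn_of_hasDerivWithinAt_nonneg (convex_Ici u₀)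
    (fun u hu => (hderiv u hu).continuousAt.continuousWithinAt)
    (fun u hu => (hderiv u (interior_subset hu)).hasDerivWithinAt) fun u hu => ?_
  have hu : u₀ ≤ u := interior_subset hu
  have hpos : 0 < f u * F u ^ q := mul_pos (hfpos u hu) (Real.rpow_pos_of_pos (hFpos u hu) q)
  exact mul_nonneg (sub_nonneg.2 hq) (sub_nonneg.2 (inv_anti₀ hpos (hM u hu)))

theorem exists_le_mul_rpow_of_mul_rpow_le {M : ℝ} (hu₀ : 0 < u₀) (hq : 1 < q)
    (hF : ∀ u ≥ u₀, HasDerivAt F (-(1 / f u)) u) (hfpos : ∀ u ≥ u₀, 0 < f u)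
    (hFpos : ∀ u ≥ u₀, 0 < F u) (hM : ∀ u ≥ u₀, f u * F u ^ q ≤ M) :
    ∃ C > 0, ∀ u ≥ 2 * u₀, F u ≤ C * u ^ (-(1 / (q - 1))) := by
  have hM0 : 0 < M := (mul_pos (hfpos u₀ le_rfl)
    (Real.rpow_pos_of_pos (hFpos u₀ le_rfl) q)).trans_le (hM u₀ le_rfl)
  set c := (q - 1) / M
  have hc : 0 < c := div_pos (sub_pos.2 hq) hM0
  refine ⟨(c / 2) ^ (-(1 / (q - 1))), Real.rpow_pos_of_pos (half_pos hc) _, fun u hu => ?_⟩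
  have hu' : u₀ ≤ u := by linarith
  refine rpow_le_of_mul_le_rpow_one_sub hq (half_pos hc) (by linarith) (hFpos u hu') ?_
  have hgrowth : F u₀ ^ (1 - q) - c * u₀ ≤ F u ^ (1 - q) - c * u :=
    monotoneOn_rpow_one_sub_sub_mul hq.le hF hfpos hFpos hM self_mem_Ici hu' hu'
  have hF₀ : 0 < F u₀ ^ (1 - q) := Real.rpow_pos_of_pos (hFpos u₀ le_rfl) _
  nlinarith [mul_nonneg hc.le (sub_nonneg.2 hu)]

end TailComparison

theorem stmt_6_general (f f' : ℝ → ℝ)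
    (hf' : ∀ u > (0 : ℝ), HasDerivAt f (f' u) u)
    (hfpos : ∀ u > (0 : ℝ), 0 < f u)
    (hint : ∀ u > (0 : ℝ), MeasureTheory.IntegrableOn (fun s => 1 / f s) (Set.Ioi u))
    (F : ℝ → ℝ) (hF : ∀ u > (0 : ℝ), F u = ∫ s in Set.Ioi u, 1 / f s)
    (u₀ qS : ℝ) (hu₀ : 0 < u₀) (hqS : 1 < qS)
    (hbound : ∀ u ≥ u₀, f' u * F u ≤ qS) :
    AntitoneOn (fun u => f u * (F u) ^ qS) (Set.Ici u₀) ∧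
      ∃ C > (0 : ℝ), ∃ u₁ : ℝ, ∀ u ≥ u₁, F u ≤ C * u ^ (-(1 / (qS - 1))) := by
  have hFderiv : ∀ u > (0 : ℝ), HasDerivAt F (-(1 / f u)) u := fun u hu =>
    (hasDerivAt_integral_Ioi (hint (u / 2) (by positivity)) (by linarith)
      (continuousAt_const.div (hf' u hu).continuousAt (hfpos u hu).ne')).congr_of_eventuallyEq
      (eventually_of_mem (Ioi_mem_nhds hu) hF)
  have hFpos : ∀ u > (0 : ℝ), 0 < F u := fun u hu =>
    hF u hu ▸ integral_Ioi_pos (hint u hu) fun x hx => one_div_pos.2 (hfpos x (hu.trans hx))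
  have hpos : ∀ u ≥ u₀, 0 < u := fun u hu => hu₀.trans_le hu
  have hanti := antitoneOn_mul_rpow (fun u hu => hf' u (hpos u hu))
    (fun u hu => hFderiv u (hpos u hu)) (fun u hu => hfpos u (hpos u hu))
    (fun u hu => hFpos u (hpos u hu)) hbound
  obtain ⟨C, hC, hdecay⟩ := exists_le_mul_rpow_of_mul_rpow_le hu₀ hqS
    (fun u hu => hFderiv u (hpos u hu)) (fun u hu => hfpos u (hpos u hu))
    (fun u hu => hFpos u (hpos u hu)) fun u hu => hanti self_mem_Ici hu hu
  exact ⟨hanti, C, hC, 2 * u₀, hdecay⟩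

theorem stmt_6 (f f' : ℝ → ℝ)
    (hf' : ∀ u > (0 : ℝ), HasDerivAt f (f' u) u)
    (hf'c : ContinuousOn f' (Set.Ioi 0))
    (hfpos : ∀ u > (0 : ℝ), 0 < f u)
    (hf'pos : ∀ u > (0 : ℝ), 0 < f' u)
    (hint : ∀ u > (0 : ℝ), MeasureTheory.IntegrableOn (fun s => 1 / f s) (Set.Ioi u))
    (F : ℝ → ℝ) (hF : ∀ u > (0 : ℝ), F u = ∫ s in Set.Ioi u, 1 / f s)
    (u₀ qS : ℝ) (hu₀ : 0 < u₀) (hqS : 1 < qS)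
    (hbound : ∀ u ≥ u₀, f' u * F u ≤ qS) :
    AntitoneOn (fun u => f u * (F u) ^ qS) (Set.Ici u₀) ∧
      ∃ C > (0 : ℝ), ∃ u₁ : ℝ, ∀ u ≥ u₁, F u ≤ C * u ^ (-(1 / (qS - 1))) :=
  stmt_6_general f f' hf' hfpos hint F hF u₀ qS hu₀ hqS hbound
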